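/- arXiv:2503.11021 — 2 statements merged into one kernel-verified Lean document; each statement's English description precedes it below -/
import Mathlib

section
/- Let U and D be compact topological spaces, z fixed, and let Φ : U × D → ℝ be continuous. Suppose min_{u∈U} max_{d∈D} Φ(u,d) = max_{d∈D} min_{u∈U} Φ(u,d) =: H (the Isaacs condition). Then for every t < 0: inf over measurable u : [t,0) → U of sup over measurable d : [t,0) → D of (1/|t|)∫_t^0 Φ(u(τ),d(τ)) dτ equals H, and similarly sup over measurable d of inf over measurable u of the same time-averaged integral equals H. -/
/-!
Against a constant control `u₀`, no disturbance can average more than `max_d Φ(u₀, d)`, so the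
inf-sup over signals is at most `min_u max_d Φ`. Conversely, given a measurable control `u` and
`c < min_u max_d Φ`, each point of `U` has an open neighbourhood on which a single `d` beats `c`;
a countable subcover gives a measurable, piecewise constant disturbance with
`Φ(u τ, d τ) > c` for all `τ`, so the inf-sup is at least `min_u max_d Φ`. The sup-inf is the
same statement for `-Φ` with the players swapped, and the Isaacs condition identifies both
values with `H`.
-/

open Set MeasureTheory

lemma Real.iSup_neg {ι : Sort*} (f : ι → ℝ) : ⨆ i, -f i = -⨅ i, f i := by
  rw [iInf, ← Real.sSup_neg, iSup, ← image_neg_eq_neg, ← range_comp]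
  rfl

lemma Real.iInf_neg {ι : Sort*} (f : ι → ℝ) : ⨅ i, -f i = -⨆ i, f i := by
  rw [iSup, ← Real.sInf_neg, iInf, ← image_neg_eq_neg, ← range_comp]
  rfl

noncomputable def timeAverage (t : ℝ) (f : ℝ → ℝ) : ℝ := (1 / |t|) * ∫ τ in t..0, f τ

lemma timeAverage_neg (t : ℝ) (f : ℝ → ℝ) :
    timeAverage t (fun τ => -f τ) = -timeAverage t f := by
  simp only [timeAverage, intervalIntegral.integral_neg, mul_neg]

lemma timeAverage_const {t : ℝ} (ht : t < 0) (c : ℝ) : timeAverage t (fun _ => c) = c := by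
  rw [timeAverage, intervalIntegral.integral_const, smul_eq_mul, abs_of_neg ht]
  field_simp [ht.ne]
  ring

lemma timeAverage_mono {t : ℝ} (ht : t ≤ 0) {f g : ℝ → ℝ} (hf : IntervalIntegrable f volume t 0)
    (hg : IntervalIntegrable g volume t 0) (hfg : ∀ τ, f τ ≤ g τ) :
    timeAverage t f ≤ timeAverage t g :=
  mul_le_mul_of_nonneg_left (intervalIntegral.integral_mono_on ht hf hg fun τ _ => hfg τ)
    (by positivity)

lemma abs_timeAverage_le {t : ℝ} (ht : t ≠ 0) {f : ℝ → ℝ} {C : ℝ} (hC : ∀ τ, |f τ| ≤ C) :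
    |timeAverage t f| ≤ C := by
  have := intervalIntegral.norm_integral_le_of_norm_le_const (a := t) (b := 0)
    fun τ _ => (Real.norm_eq_abs (f τ)).trans_le (hC τ)
  rw [Real.norm_eq_abs, zero_sub, abs_neg] at this
  rw [timeAverage, abs_mul, abs_of_nonneg (by positivity), one_div, inv_mul_le_iff₀ (abs_pos.2 ht)]
  linarith

/-- The measurability of `a ↦ Φ (u a) (g a)` is part of the conclusion: without second
countability it does not follow from that of `u` and `g`, but it does for the piecewise constant
`g` built here. -/
theorem exists_measurable_forall_lt_comp {α U D : Type*} [MeasurableSpace α]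
    [TopologicalSpace U] [LindelofSpace U] [Nonempty U] [MeasurableSpace U]
    [OpensMeasurableSpace U] [MeasurableSpace D] {Φ : U → D → ℝ}
    (hΦ : ∀ y, LowerSemicontinuous (Φ · y)) {c : ℝ} (hc : ∀ x, ∃ y, c < Φ x y)
    {u : α → U} (hu : Measurable u) :
    ∃ g : α → D, Measurable g ∧ Measurable (fun a => Φ (u a) (g a)) ∧ ∀ a, c < Φ (u a) (g a) := by
  classical
  choose φ hφ using hc
  obtain ⟨r, hr, hcover⟩ := isLindelof_univ.elim_countable_subcover
    (fun x => {x' | c < Φ x' (φ x)}) (fun x => (hΦ (φ x)).isOpen_preimage c)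
    fun x _ => mem_iUnion.2 ⟨x, hφ x⟩
  have hr_ne : r.Nonempty := by
    obtain ⟨x, hx, -⟩ := mem_iUnion₂.1 (hcover (mem_univ (Classical.arbitrary U)))
    exact ⟨x, hx⟩
  obtain ⟨e, rfl⟩ := hr.exists_eq_range hr_ne
  have hcov (a : α) : ∃ n, c < Φ (u a) (φ (e n)) := by
    simpa using hcover (mem_univ (u a))
  have hpieces (n : ℕ) : MeasurableSet {a | c < Φ (u a) (φ (e n))} :=
    hu (((hΦ _).isOpen_preimage c).measurableSet)
  exact ⟨fun a => φ (e (Nat.find (hcov a))),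
    Measurable.find (f := fun n _ => φ (e n)) (fun _ => measurable_const) hpieces hcov,
    Measurable.find (f := fun n a => Φ (u a) (φ (e n))) (fun _ => (hΦ _).measurable.comp hu)
      hpieces hcov,
    fun a => Nat.find_spec (hcov a)⟩

instance {α β : Type*} [MeasurableSpace α] [MeasurableSpace β] [Nonempty β] :
    Nonempty {f : α → β // Measurable f} :=
  ⟨⟨fun _ => Classical.arbitrary β, measurable_const⟩⟩

section Game

variable {U D : Type*} [TopologicalSpace U] [CompactSpace U] [Nonempty U] [MeasurableSpace U]
  [OpensMeasurableSpace U] [TopologicalSpace D] [CompactSpace D] [Nonempty D] [MeasurableSpace D]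
  [OpensMeasurableSpace D]

theorem iInf_iSup_timeAverage_eq (Φ : U → D → ℝ) (hΦ : Continuous fun p : U × D => Φ p.1 p.2)
    {t : ℝ} (ht : t < 0) :
    (⨅ u : {f : ℝ → U // Measurable f}, ⨆ d : {f : ℝ → D // Measurable f},
      timeAverage t fun τ => Φ (u.1 τ) (d.1 τ)) = ⨅ x, ⨆ y, Φ x y := by
  obtain ⟨C, hC⟩ : ∃ C, ∀ x y, |Φ x y| ≤ C := by
    obtain ⟨C, hC⟩ := isCompact_univ.exists_bound_of_continuousOn hΦ.continuousOn
    exact ⟨C, fun x y => hC (x, y) (mem_univ _)⟩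
  have hint {f : ℝ → ℝ} (hf : Measurable f) (hfC : ∀ τ, |f τ| ≤ C) :
      IntervalIntegrable f volume t 0 :=
    intervalIntegrable_const.mono_fun' hf.aestronglyMeasurable (ae_of_all _ hfC)
  have hbdd_Φ (x : U) : BddAbove (range (Φ x)) :=
    ⟨C, forall_mem_range.2 fun y => (abs_le.1 (hC x y)).2⟩
  have hbdd_avg (u : ℝ → U) : BddAbove (range fun d : {f : ℝ → D // Measurable f} =>
      timeAverage t fun τ => Φ (u τ) (d.1 τ)) :=
    ⟨C, forall_mem_range.2 fun d => (abs_le.1 (abs_timeAverage_le ht.ne fun τ => hC _ _)).2⟩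
  obtain ⟨y₀⟩ := ‹Nonempty D›
  refine le_antisymm (le_ciInf fun x => ?_) (le_ciInf fun u => ?_)
  · have hbdd : BddBelow (range fun u : {f : ℝ → U // Measurable f} =>
        ⨆ d : {f : ℝ → D // Measurable f}, timeAverage t fun τ => Φ (u.1 τ) (d.1 τ)) :=
      ⟨-C, forall_mem_range.2 fun u =>
        (neg_le_of_abs_le (abs_timeAverage_le ht.ne fun τ => hC _ _)).trans
          (le_ciSup (hbdd_avg u.1) ⟨fun _ => y₀, measurable_const⟩)⟩
    calc _ ≤ ⨆ d : {f : ℝ → D // Measurable f}, timeAverage t fun τ => Φ x (d.1 τ) :=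
          ciInf_le hbdd ⟨fun _ => x, measurable_const⟩
      _ ≤ ⨆ y, Φ x y := ciSup_le fun d =>
          (timeAverage_mono ht.le
            (hint ((hΦ.comp (continuous_const.prodMk continuous_id)).measurable.comp d.2)
              fun τ => hC _ _)
            intervalIntegrable_const fun τ => le_ciSup (hbdd_Φ x) (d.1 τ)).trans_eq
          (timeAverage_const ht _)
  · refine le_of_forall_lt_imp_le_of_dense fun c hc => ?_
    have hbdd : BddBelow (range fun x => ⨆ y, Φ x y) :=
      ⟨-C, forall_mem_range.2 fun x => (neg_le_of_abs_le (hC x y₀)).trans (le_ciSup (hbdd_Φ x) y₀)⟩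
    have hc' (x : U) : ∃ y, c < Φ x y := exists_lt_of_lt_ciSup (hc.trans_le (ciInf_le hbdd x))
    obtain ⟨g, hg, hug, hcg⟩ := exists_measurable_forall_lt_comp
      (fun y => (hΦ.comp (continuous_id.prodMk continuous_const)).lowerSemicontinuous) hc' u.2
    calc c = timeAverage t fun _ => c := (timeAverage_const ht c).symm
      _ ≤ timeAverage t fun τ => Φ (u.1 τ) (g τ) :=
          timeAverage_mono ht.le intervalIntegrable_const (hint hug fun τ => hC _ _)
            fun τ => (hcg τ).le
      _ ≤ _ := le_ciSup (hbdd_avg u.1) ⟨g, hg⟩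

theorem iSup_iInf_timeAverage_eq (Φ : U → D → ℝ) (hΦ : Continuous fun p : U × D => Φ p.1 p.2)
    {t : ℝ} (ht : t < 0) :
    (⨆ d : {f : ℝ → D // Measurable f}, ⨅ u : {f : ℝ → U // Measurable f},
      timeAverage t fun τ => Φ (u.1 τ) (d.1 τ)) = ⨆ y, ⨅ x, Φ x y := by
  have h := iInf_iSup_timeAverage_eq (fun y x => -Φ x y) (hΦ.comp continuous_swap).neg ht
  simpa only [timeAverage_neg, Real.iSup_neg, Real.iInf_neg, neg_inj] using h

end Game

/-- Under the Isaacs condition `min_u max_d Φ = max_d min_u Φ = H` for a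
continuous payoff `Φ` on a product of compact spaces, for every `t < 0` the inf-sup and the
sup-inf (over measurable control/disturbance signals) of the time-averaged payoff
`(1/|t|)∫_t^0 Φ(u(τ),d(τ)) dτ` both equal `H`. -/
theorem stmt8 {U D : Type*}
    [TopologicalSpace U] [CompactSpace U] [Nonempty U] [MeasurableSpace U] [BorelSpace U]
    [TopologicalSpace D] [CompactSpace D] [Nonempty D] [MeasurableSpace D] [BorelSpace D]
    (Φ : U → D → ℝ) (hΦ : Continuous fun p : U × D => Φ p.1 p.2)
    (H : ℝ)
    (hIsaacs₁ : (⨅ u : U, ⨆ d : D, Φ u d) = H)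
    (hIsaacs₂ : (⨆ d : D, ⨅ u : U, Φ u d) = H)
    (t : ℝ) (ht : t < 0) :
    (⨅ u : {f : ℝ → U // Measurable f}, ⨆ d : {f : ℝ → D // Measurable f},
      (1 / |t|) * ∫ τ in t..(0:ℝ), Φ (u.1 τ) (d.1 τ)) = H ∧
    (⨆ d : {f : ℝ → D // Measurable f}, ⨅ u : {f : ℝ → U // Measurable f},
      (1 / |t|) * ∫ τ in t..(0:ℝ), Φ (u.1 τ) (d.1 τ)) = H := by
  exact ⟨(iInf_iSup_timeAverage_eq Φ hΦ ht).trans hIsaacs₁,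
    (iSup_iInf_timeAverage_eq Φ hΦ ht).trans hIsaacs₂⟩
end

section
/- Let U, D be compact metric spaces and Φ : U × D → ℝ continuous, and suppose min_u max_d Φ = max_d min_u Φ = H. Fix t < 0, a partition t = t₀ < ⋯ < t_r = 0, and let U_j, D_j denote the sets of measurable functions from [t_{j-1},t_j) to U and D respectively. Then the multistage alternating value inf_{u₁∈U₁} sup_{d₁∈D₁} ⋯ inf_{u_r∈U_r} sup_{d_r∈D_r} (1/|t|) ∫_t^0 Φ([u₁,…,u_r)(τ), [d₁,…,d_r)(τ)) dτ equals H, where [·,…,·) denotes concatenation along the partition. -/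
/-!
The alternation is harmless because each player can ignore it by repeating one static action.
If the minimizer plays a fixed `u` in every stage, every stage average is at most
`⨆ d, Φ u d`, so the multistage value is at most `⨅ u, ⨆ d, Φ u d = H`; symmetrically a
maximizer repeating `d` forces it up to `⨆ d, ⨅ u, Φ u d = H`. Compactness bounds `Φ`, which
keeps every `⨅`/`⨆` over `ℝ` away from the junk value of unbounded families.
-/

open Set MeasureTheory

/-- The alternating multistage value `inf_{a₁} sup_{b₁} ⋯ inf_{a_r} sup_{b_r} J`, where in
each stage the `α`-player (minimizer) commits first. -/
noncomputable def altVal {α β : Type*} :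
    (r : ℕ) → ((Fin r → α) → (Fin r → β) → ℝ) → ℝ
  | 0, J => J Fin.elim0 Fin.elim0
  | r + 1, J =>
    ⨅ a : α, ⨆ b : β, altVal r fun as bs => J (Fin.cons a as) (Fin.cons b bs)

section AltVal

variable {α β : Type*}

theorem ciSup_mem_Icc {ι γ : Type*} [Nonempty ι] [ConditionallyCompleteLattice γ]
    {f : ι → γ} {lo hi : γ}
    (hf : ∀ i, f i ∈ Icc lo hi) : ⨆ i, f i ∈ Icc lo hi :=
  ⟨(hf (Classical.arbitrary ι)).1.trans
      (le_ciSup ⟨hi, forall_mem_range.2 fun i => (hf i).2⟩ _),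
    ciSup_le fun i => (hf i).2⟩

theorem ciInf_mem_Icc {ι γ : Type*} [Nonempty ι] [ConditionallyCompleteLattice γ]
    {f : ι → γ} {lo hi : γ}
    (hf : ∀ i, f i ∈ Icc lo hi) : ⨅ i, f i ∈ Icc lo hi :=
  ⟨le_ciInf fun i => (hf i).1,
    (ciInf_le ⟨lo, forall_mem_range.2 fun i => (hf i).1⟩ _).trans
      (hf (Classical.arbitrary ι)).2⟩

theorem altVal_mem_Icc [Nonempty α] [Nonempty β] {lo hi : ℝ} :
    ∀ {r : ℕ} {J : (Fin r → α) → (Fin r → β) → ℝ},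
      (∀ as bs, J as bs ∈ Icc lo hi) → altVal r J ∈ Icc lo hi
  | 0, _, hJ => hJ _ _
  | _ + 1, _, hJ => ciInf_mem_Icc fun _ => ciSup_mem_Icc fun _ =>
      altVal_mem_Icc fun _ _ => hJ _ _

theorem altVal_le_of_le_at_const [Nonempty β] {lo hi c : ℝ} (a : α) :
    ∀ {r : ℕ} {J : (Fin r → α) → (Fin r → β) → ℝ},
      (∀ as bs, J as bs ∈ Icc lo hi) → (∀ bs, J (fun _ => a) bs ≤ c) → altVal r J ≤ c
  | 0, J, _, h => by
    change J Fin.elim0 Fin.elim0 ≤ c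
    convert h Fin.elim0
  | r + 1, J, hJ, h => by
    have : Nonempty α := ⟨a⟩
    refine (ciInf_le ⟨lo, forall_mem_range.2 fun a' => (ciSup_mem_Icc fun _ =>
      altVal_mem_Icc fun _ _ => hJ _ _).1⟩ a).trans (ciSup_le fun b => ?_)
    exact altVal_le_of_le_at_const a (fun _ _ => hJ _ _) fun bs =>
      (Fin.cons_self_tail (fun _ : Fin (r + 1) => a)).symm ▸ h (Fin.cons b bs)

theorem le_altVal_of_le_at_const [Nonempty α] {lo hi c : ℝ} (b : β) :
    ∀ {r : ℕ} {J : (Fin r → α) → (Fin r → β) → ℝ},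
      (∀ as bs, J as bs ∈ Icc lo hi) → (∀ as, c ≤ J as fun _ => b) → c ≤ altVal r J
  | 0, J, _, h => by
    change c ≤ J Fin.elim0 Fin.elim0
    convert h Fin.elim0
  | r + 1, J, hJ, h => by
    have : Nonempty β := ⟨b⟩
    refine le_ciInf fun a => le_trans ?_ (le_ciSup ⟨hi, forall_mem_range.2 fun b' =>
      (altVal_mem_Icc fun _ _ => hJ _ _).2⟩ b)
    exact le_altVal_of_le_at_const b (fun _ _ => hJ _ _) fun as =>
      (Fin.cons_self_tail (fun _ : Fin (r + 1) => b)).symm ▸ h (Fin.cons a as)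

end AltVal

theorem Fin.sum_succ_sub_castSucc {M : Type*} [AddCommGroup M] :
    ∀ {r : ℕ} (f : Fin (r + 1) → M),
      ∑ j : Fin r, (f j.succ - f j.castSucc) = f (Fin.last r) - f 0
  | 0, _ => by simp
  | r + 1, f => by
    rw [Fin.sum_univ_castSucc]
    simp only [Fin.succ_castSucc]
    rw [Fin.sum_succ_sub_castSucc (fun j => f j.castSucc), Fin.succ_last, Fin.castSucc_zero]
    abel

theorem intervalIntegral_mem_Icc_of_mem_Icc {f : ℝ → ℝ} {a b lo hi : ℝ} (hab : a ≤ b)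
    (hf : Measurable f) (hbd : ∀ τ, f τ ∈ Icc lo hi) :
    ∫ τ in a..b, f τ ∈ Icc (lo * (b - a)) (hi * (b - a)) := by
  have hint : IntervalIntegrable f volume a b :=
    (intervalIntegrable_const (c := max |lo| |hi|)).mono_fun' hf.aestronglyMeasurable
      (.of_forall fun τ => abs_le_max_abs_abs (hbd τ).1 (hbd τ).2)
  constructor
  · simpa [mul_comm] using intervalIntegral.integral_mono_on hab intervalIntegrable_const hint
      fun τ _ => (hbd τ).1
  · simpa [mul_comm] using intervalIntegral.integral_mono_on hab hint intervalIntegrable_const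
      fun τ _ => (hbd τ).2

section Partition

variable {r : ℕ}

/-- The time average of the concatenation `[f₀, …, f_{r-1})` along the partition `tP`. -/
noncomputable def partitionAverage (tP : Fin (r + 1) → ℝ) (f : Fin r → ℝ → ℝ) : ℝ :=
  (1 / (tP (Fin.last r) - tP 0)) * ∑ j : Fin r, ∫ τ in tP j.castSucc..tP j.succ, f j τ

variable {tP : Fin (r + 1) → ℝ}

theorem partitionAverage_mem_Icc (htP : Monotone tP) (hL : tP 0 < tP (Fin.last r))
    {f : Fin r → ℝ → ℝ} {lo hi : ℝ} (hf : ∀ j, Measurable (f j))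
    (hbd : ∀ j τ, f j τ ∈ Icc lo hi) : partitionAverage tP f ∈ Icc lo hi := by
  have hstage j := intervalIntegral_mem_Icc_of_mem_Icc (htP j.castSucc_le_succ) (hf j) (hbd j)
  have hL' : 0 < tP (Fin.last r) - tP 0 := sub_pos.2 hL
  rw [partitionAverage, one_div, mem_Icc, le_inv_mul_iff₀ hL', inv_mul_le_iff₀ hL',
    mul_comm _ lo, mul_comm _ hi, ← Fin.sum_succ_sub_castSucc, Finset.mul_sum, Finset.mul_sum]
  exact ⟨Finset.sum_le_sum fun j _ => (hstage j).1, Finset.sum_le_sum fun j _ => (hstage j).2⟩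

theorem abs_partitionAverage_le (htP : Monotone tP) (hL : tP 0 < tP (Fin.last r))
    {f : Fin r → ℝ → ℝ} {C : ℝ}
    (hbd : ∀ j τ, |f j τ| ≤ C) : |partitionAverage tP f| ≤ C := by
  have hstage (j : Fin r) : |∫ τ in tP j.castSucc..tP j.succ, f j τ| ≤
      C * (tP j.succ - tP j.castSucc) := by
    rw [← abs_of_nonneg (sub_nonneg.2 (htP j.castSucc_le_succ)), ← Real.norm_eq_abs]
    exact intervalIntegral.norm_integral_le_of_norm_le_const fun τ _ => hbd j τ
  have hL' : 0 < tP (Fin.last r) - tP 0 := sub_pos.2 hL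
  rw [partitionAverage, abs_mul, abs_of_pos (one_div_pos.2 hL'), one_div, inv_mul_le_iff₀ hL',
    mul_comm, ← Fin.sum_succ_sub_castSucc, Finset.mul_sum]
  exact (Finset.abs_sum_le_sum_abs _ _).trans (Finset.sum_le_sum fun j _ => hstage j)

end Partition

section StaticGame

variable {U D : Type*} [MeasurableSpace U] [MeasurableSpace D] {r : ℕ}

noncomputable def multistagePayoff (tP : Fin (r + 1) → ℝ) (Φ : U → D → ℝ)
    (u : Fin r → {f : ℝ → U // Measurable f})
    (d : Fin r → {f : ℝ → D // Measurable f}) : ℝ :=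
  partitionAverage tP fun j τ => Φ ((u j).1 τ) ((d j).1 τ)

variable {tP : Fin (r + 1) → ℝ} {Φ : U → D → ℝ} {C : ℝ}

-- `τ ↦ Φ (u τ) (d τ)` need not be measurable (no Borel product σ-algebra on `U × D`), so this
-- bound cannot go through `partitionAverage_mem_Icc`.
theorem multistagePayoff_mem_Icc (htP : Monotone tP) (hL : tP 0 < tP (Fin.last r))
    (hC : ∀ u d, |Φ u d| ≤ C) (u d) : multistagePayoff tP Φ u d ∈ Icc (-C) C :=
  abs_le.1 (abs_partitionAverage_le htP hL fun _ _ => hC _ _)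

theorem altVal_multistagePayoff_le_iSup [TopologicalSpace U] [TopologicalSpace D]
    [OpensMeasurableSpace D] [Nonempty D]
    (hΦ : Continuous fun p : U × D => Φ p.1 p.2) (htP : Monotone tP)
    (hL : tP 0 < tP (Fin.last r)) (hC : ∀ u d, |Φ u d| ≤ C) (u : U) :
    altVal r (multistagePayoff tP Φ) ≤ ⨆ d, Φ u d :=
  have : Nonempty {f : ℝ → D // Measurable f} :=
    ⟨⟨fun _ => Classical.arbitrary D, measurable_const⟩⟩
  have hle_iSup (d : D) : Φ u d ≤ ⨆ d', Φ u d' :=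
    le_ciSup ⟨C, forall_mem_range.2 fun d' => (abs_le.1 (hC u d')).2⟩ d
  altVal_le_of_le_at_const (⟨fun _ => u, measurable_const⟩ : {f : ℝ → U // Measurable f})
    (multistagePayoff_mem_Icc htP hL hC)
    fun d => (partitionAverage_mem_Icc (f := fun j τ => Φ u ((d j).1 τ)) htP hL
      (fun j => (hΦ.uncurry_left u).measurable.comp (d j).2)
      fun _ _ => ⟨(abs_le.1 (hC _ _)).1, hle_iSup _⟩).2

theorem iInf_le_altVal_multistagePayoff [TopologicalSpace U] [TopologicalSpace D]
    [OpensMeasurableSpace U] [Nonempty U]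
    (hΦ : Continuous fun p : U × D => Φ p.1 p.2) (htP : Monotone tP)
    (hL : tP 0 < tP (Fin.last r)) (hC : ∀ u d, |Φ u d| ≤ C) (d : D) :
    ⨅ u, Φ u d ≤ altVal r (multistagePayoff tP Φ) :=
  have : Nonempty {f : ℝ → U // Measurable f} :=
    ⟨⟨fun _ => Classical.arbitrary U, measurable_const⟩⟩
  have hiInf_le (u : U) : ⨅ u', Φ u' d ≤ Φ u d :=
    ciInf_le ⟨-C, forall_mem_range.2 fun u' => (abs_le.1 (hC u' d)).1⟩ u
  le_altVal_of_le_at_const (⟨fun _ => d, measurable_const⟩ : {f : ℝ → D // Measurable f})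
    (multistagePayoff_mem_Icc htP hL hC)
    fun u => (partitionAverage_mem_Icc (f := fun j τ => Φ ((u j).1 τ) d) htP hL
      (fun j => (hΦ.uncurry_right d).measurable.comp (u j).2)
      fun _ _ => ⟨hiInf_le _, (abs_le.1 (hC _ _)).2⟩).1

end StaticGame

theorem stmt19_general {U D : Type*}
    [TopologicalSpace U] [CompactSpace U] [Nonempty U] [MeasurableSpace U] [BorelSpace U]
    [TopologicalSpace D] [CompactSpace D] [Nonempty D] [MeasurableSpace D] [BorelSpace D]
    (Φ : U → D → ℝ) (hΦ : Continuous fun p : U × D => Φ p.1 p.2)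
    (H : ℝ)
    (hIsaacs₁ : (⨅ u : U, ⨆ d : D, Φ u d) = H)
    (hIsaacs₂ : (⨆ d : D, ⨅ u : U, Φ u d) = H)
    (t : ℝ) (ht : t < 0) (r : ℕ)
    (tP : Fin (r + 1) → ℝ) (htP : StrictMono tP)
    (htP0 : tP 0 = t) (htPr : tP (Fin.last r) = 0) :
    altVal (α := {f : ℝ → U // Measurable f}) (β := {f : ℝ → D // Measurable f}) r
      (fun u d => (1 / |t|) * ∑ j : Fin r,
        ∫ τ in (tP j.castSucc)..(tP j.succ), Φ ((u j).1 τ) ((d j).1 τ)) = H := by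
  have hL : tP 0 < tP (Fin.last r) := by rwa [htP0, htPr]
  rw [show |t| = tP (Fin.last r) - tP 0 by rw [htP0, htPr, abs_of_neg ht, zero_sub]]
  change altVal r (multistagePayoff tP Φ) = H
  obtain ⟨C, hC⟩ := isCompact_univ.exists_bound_of_continuousOn hΦ.continuousOn
  have hΦC (u : U) (d : D) : |Φ u d| ≤ C := hC (u, d) trivial
  exact le_antisymm
    (hIsaacs₁ ▸ le_ciInf (altVal_multistagePayoff_le_iSup hΦ htP.monotone hL hΦC))
    (hIsaacs₂ ▸ ciSup_le (iInf_le_altVal_multistagePayoff hΦ htP.monotone hL hΦC))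

/-- For a continuous payoff `Φ` on compact `U × D` satisfying the Isaacs
condition with value `H`, and any partition `t = t₀ < ⋯ < t_r = 0` of `[t,0)` (`t < 0`), the
multistage alternating value
`inf_{u₁} sup_{d₁} ⋯ inf_{u_r} sup_{d_r} (1/|t|)∫_t^0 Φ([u₁,…,u_r)(τ), [d₁,…,d_r)(τ)) dτ`
over measurable stagewise controls/disturbances equals `H`. -/
theorem stmt19 {U D : Type*}
    [TopologicalSpace U] [CompactSpace U] [Nonempty U] [MeasurableSpace U] [BorelSpace U]
    [TopologicalSpace D] [CompactSpace D] [Nonempty D] [MeasurableSpace D] [BorelSpace D]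
    (Φ : U → D → ℝ) (hΦ : Continuous fun p : U × D => Φ p.1 p.2)
    (H : ℝ)
    (hIsaacs₁ : (⨅ u : U, ⨆ d : D, Φ u d) = H)
    (hIsaacs₂ : (⨆ d : D, ⨅ u : U, Φ u d) = H)
    (t : ℝ) (ht : t < 0) (r : ℕ) (hr : 0 < r)
    (tP : Fin (r + 1) → ℝ) (htP : StrictMono tP)
    (htP0 : tP 0 = t) (htPr : tP (Fin.last r) = 0) :
    altVal (α := {f : ℝ → U // Measurable f}) (β := {f : ℝ → D // Measurable f}) r
      (fun u d => (1 / |t|) * ∑ j : Fin r,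
        ∫ τ in (tP j.castSucc)..(tP j.succ), Φ ((u j).1 τ) ((d j).1 τ)) = H :=
  stmt19_general Φ hΦ H hIsaacs₁ hIsaacs₂ t ht r tP htP htP0 htPr
end
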